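/- For every integer m ≥ 4, the Lie algebra 𝔤⁴_{(m,m−1)} is nilpotent of nilindex 2m−1, is naturally graded (a natural grading being given by 𝔤₁ = span{X₁,X₂}, 𝔤_i = span{X_{i+1}} for 2 ≤ i ≤ 2m−2, and 𝔤_{2m−1} = span{X_{2m},X_{2m+1}}), is (m−1)-abelian (C^{m−1}𝔤 is abelian and C^{m−2}𝔤 is not abelian), and has characteristic sequence (2m−1,1,1): dim ker (ad X₁)^i = min(i, 2m−1) + 2 for every i ≥ 1, while every Y ∉ [𝔤,𝔤] satisfies dim ker(ad Y) ≥ 3. -/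

import Mathlib

/-!
Give `X₁, X₂` degree `1`, `Xₙ` degree `n - 1` for `3 ≤ n ≤ 2m` and `X_{2m+1}` degree `2m - 1`.
The structure constants are homogeneous for these degrees, and every basis vector of degree
`d ≥ 2` is a bracket with one of degree `d - 1` (`X_{n+1} = [X₁, Xₙ]`,
`X_{2m+1} = [X₂, X_{2m-1}]`). Hence `C^k 𝔤` is spanned by the basis vectors of degree `> k`,
which gives the nilindex and the natural grading; `C^{m-1} 𝔤` is abelian because its brackets
would have degree `≥ 2m`, while `[X_m, X_{m+1}] = ±X_{2m+1}` with both factors in `C^{m-2} 𝔤`.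
`ad X₁` is the shift `X₂ ↦ X₃ ↦ ⋯ ↦ X_{2m} ↦ 0` and kills `X₁` and `X_{2m+1}`, so
`ker (ad X₁)^i` is spanned by the basis vectors that are not shifted `i` times. Finally the
top-degree vectors `X_{2m}, X_{2m+1}` are central and lie in `[𝔤, 𝔤]`, so together with any
`Y ∉ [𝔤, 𝔤]` they span a `3`-dimensional subspace of `ker (ad Y)`.
-/

open Module

/-- The `i`-th basis vector (1-indexed); `0` when out of range. -/
noncomputable def basisVec {L : Type} [AddCommGroup L] [Module ℂ L] {n : ℕ}
    (b : Basis (Fin n) ℂ L) (i : ℕ) : L :=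
  if h : 1 ≤ i ∧ i ≤ n then b ⟨i - 1, by omega⟩ else 0

/-- `b` realizes the structure constants of `𝔤⁴_{(m,m-1)}` (1-indexed basis
`X₁, …, X_{2m+1}`): `[X₁, Xⱼ] = X_{j+1}` for `2 ≤ j ≤ 2m-1`,
`[Xⱼ, X_{2m+1-j}] = (-1)ʲ X_{2m+1}` for `2 ≤ j ≤ m`, all other brackets of basis
vectors being zero up to antisymmetry. -/
def IsG4Basis {L : Type} [LieRing L] [LieAlgebra ℂ L] (m : ℕ)
    (b : Basis (Fin (2 * m + 1)) ℂ L) : Prop :=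
  ∀ a c : ℕ, a < c →
    ⁅basisVec b a, basisVec b c⁆ =
      (if a = 1 ∧ 2 ≤ c ∧ c ≤ 2 * m - 1 then basisVec b (c + 1) else 0) +
      (if 2 ≤ a ∧ a ≤ m ∧ a + c = 2 * m + 1 then
        ((-1 : ℂ)) ^ a • basisVec b (2 * m + 1) else 0)

open Submodule Finset

namespace Module.Basis

variable {R M ι : Type*} [Ring R] [AddCommGroup M] [Module R M]

theorem repr_apply_of_map_basis_eq (b : Basis ι R M) (f : M →ₗ[R] M) {s : Set ι}
    {σ : ι → ι} (hσ : Set.InjOn σ s) (hf_mem : ∀ j ∈ s, f (b j) = b (σ j))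
    (hf_notMem : ∀ j ∉ s, f (b j) = 0) {j : ι} (hj : j ∈ s) (x : M) :
    b.repr (f x) (σ j) = b.repr x j := by
  classical
  suffices b.coord (σ j) ∘ₗ f = b.coord j from LinearMap.congr_fun this x
  refine b.ext fun k => ?_
  by_cases hk : k ∈ s
  · simp only [LinearMap.comp_apply, hf_mem k hk, Basis.coord_apply, Basis.repr_self,
      Finsupp.single_apply, hσ.eq_iff hk hj]
  · have hkj : k ≠ j := fun h => hk (h ▸ hj)
    simp [hf_notMem k hk, hkj]

theorem ker_eq_span_image_compl (b : Basis ι R M) (f : M →ₗ[R] M) {s : Set ι}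
    {σ : ι → ι} (hσ : Set.InjOn σ s) (hf_mem : ∀ j ∈ s, f (b j) = b (σ j))
    (hf_notMem : ∀ j ∉ s, f (b j) = 0) :
    LinearMap.ker f = span R (b '' sᶜ) := by
  refine le_antisymm (fun x hx => b.mem_span_image.mpr fun j hj => ?_) ?_
  · intro hjs
    have := b.repr_apply_of_map_basis_eq f hσ hf_mem hf_notMem hjs x
    rw [LinearMap.mem_ker.mp hx, map_zero, Finsupp.zero_apply] at this
    exact Finsupp.mem_support_iff.mp hj this.symm
  · rw [span_le]
    rintro _ ⟨j, hj, rfl⟩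
    exact hf_notMem j hj

theorem finrank_span_image [StrongRankCondition R] (b : Basis ι R M) (s : Finset ι) :
    finrank R (span R (b '' s)) = s.card := by
  have := nontrivial_of_invariantBasisNumber R
  rw [Set.image_eq_range]
  exact (finrank_span_eq_card (b.linearIndependent.comp _ Subtype.val_injective)).trans (by simp)

theorem iSupIndep_span_image_fiber {κ : Type*} (b : Basis ι R M) (deg : ι → κ) :
    iSupIndep fun n => span R (b '' {i | deg i = n}) := by
  intro n
  rw [← span_iUnion₂, ← Set.image_iUnion₂]
  refine b.linearIndependent.disjoint_span_image (Set.disjoint_left.mpr ?_)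
  intro i hi hi'
  obtain ⟨n', hn', hi'⟩ := Set.mem_iUnion₂.mp hi'
  exact hn' (hi'.symm.trans hi)

end Module.Basis

theorem Fin.card_filter_le_val_le {n a c : ℕ} (hc : c < n) :
    #{j : Fin n | a ≤ j.val ∧ j.val ≤ c} = c + 1 - a := by
  rw [← Nat.card_Icc, ← card_map Fin.valEmbedding]
  congr 1
  ext k
  simp only [mem_map, mem_filter, mem_univ, true_and, Fin.valEmbedding_apply, mem_Icc]
  exact ⟨fun ⟨j, hj, hjk⟩ => hjk ▸ hj, fun hk => ⟨⟨k, by omega⟩, hk, rfl⟩⟩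

section Lie

variable {K L ι : Type*} [CommRing K] [LieRing L] [LieAlgebra K L]

theorem lie_mem_of_mem_span {s t : Set L} {U : Submodule K L}
    (h : ∀ x ∈ s, ∀ y ∈ t, ⁅x, y⁆ ∈ U) {x y : L} (hx : x ∈ span K s) (hy : y ∈ span K t) :
    ⁅x, y⁆ ∈ U := by
  let bracket : L →ₗ[K] L →ₗ[K] L := LinearMap.mk₂ K (⁅·, ·⁆) add_lie smul_lie lie_add lie_smul
  have : map₂ bracket (span K s) (span K t) ≤ U := by
    rw [map₂_span_span, span_le]
    rintro _ ⟨x, hx, y, hy, rfl⟩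
    exact h x hx y hy
  exact this (apply_mem_map₂ bracket hx hy)

variable (K L) in
def IsNaturalGrading (g : ℕ → Submodule K L) : Prop :=
  g 0 = ⊥ ∧ iSupIndep g ∧ (∀ i j : ℕ, ∀ x ∈ g i, ∀ y ∈ g j, ⁅x, y⁆ ∈ g (i + j)) ∧
    ∀ k : ℕ, (LieModule.lowerCentralSeries K L L k).toSubmodule = ⨆ i, ⨆ _ : k + 1 ≤ i, g i

structure IsNaturalGradingBasis (b : Basis ι K L) (deg : ι → ℕ) : Prop where
  one_le_deg : ∀ i, 1 ≤ deg i
  lie_mem : ∀ i j, ⁅b i, b j⁆ ∈ span K (b '' {l | deg l = deg i + deg j})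
  exists_lie_eq : ∀ l, 2 ≤ deg l → ∃ (x : L) (j : ι), deg j + 1 = deg l ∧ ⁅x, b j⁆ = b l

namespace IsNaturalGradingBasis

variable {b : Basis ι K L} {deg : ι → ℕ} (hB : IsNaturalGradingBasis b deg)
include hB

theorem span_one_le_deg : span K (b '' {i | 1 ≤ deg i}) = ⊤ := by
  simp [hB.one_le_deg, b.span_eq]

theorem lie_mem_span_deg {p q : ℕ} {x y : L} (hx : x ∈ span K (b '' {i | deg i = p}))
    (hy : y ∈ span K (b '' {i | deg i = q})) : ⁅x, y⁆ ∈ span K (b '' {i | deg i = p + q}) := by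
  refine lie_mem_of_mem_span ?_ hx hy
  rintro _ ⟨i, rfl, rfl⟩ _ ⟨j, rfl, rfl⟩
  exact hB.lie_mem i j

theorem lie_mem_span_le_deg {p q : ℕ} {x y : L} (hx : x ∈ span K (b '' {i | p ≤ deg i}))
    (hy : y ∈ span K (b '' {i | q ≤ deg i})) :
    ⁅x, y⁆ ∈ span K (b '' {i | p + q ≤ deg i}) := by
  refine lie_mem_of_mem_span ?_ hx hy
  rintro _ ⟨i, hi, rfl⟩ _ ⟨j, hj, rfl⟩
  refine span_mono (Set.image_mono fun l hl => ?_) (hB.lie_mem i j)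
  simp only [Set.mem_ofPred_eq] at hi hj hl ⊢
  omega

theorem lie_eq_zero_of_mem_span {p q : ℕ} (hdeg : ∀ i, deg i < p + q) {x y : L}
    (hx : x ∈ span K (b '' {i | p ≤ deg i})) (hy : y ∈ span K (b '' {i | q ≤ deg i})) :
    ⁅x, y⁆ = 0 := by
  have := hB.lie_mem_span_le_deg hx hy
  rwa [show {i | p + q ≤ deg i} = ∅ from Set.eq_empty_of_forall_notMem fun i hi =>
    (hdeg i).not_ge hi, Set.image_empty, span_empty, mem_bot] at this

theorem lie_basis_eq_zero_of_forall_deg_le {l : ι} (hl : ∀ i, deg i ≤ deg l) (x : L) :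
    ⁅x, b l⁆ = 0 :=
  hB.lie_eq_zero_of_mem_span (p := 1) (fun i => Nat.lt_one_add_iff.mpr (hl i))
    (hB.span_one_le_deg ▸ mem_top) (subset_span (Set.mem_image_of_mem b (le_refl (deg l))))

theorem lowerCentralSeries_le_span (k : ℕ) :
    (LieModule.lowerCentralSeries K L L k).toSubmodule ≤ span K (b '' {i | k + 1 ≤ deg i}) := by
  induction k with
  | zero => simp [hB.span_one_le_deg]
  | succ k ih =>
    rw [LieModule.lowerCentralSeries_succ, LieSubmodule.lieIdeal_oper_eq_linear_span', span_le]
    rintro _ ⟨x, -, y, hy, rfl⟩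
    have := hB.lie_mem_span_le_deg (hB.span_one_le_deg ▸ mem_top : x ∈ _) (ih hy)
    rwa [add_comm 1, add_assoc] at this

theorem basis_mem_lowerCentralSeries (l : ι) :
    b l ∈ LieModule.lowerCentralSeries K L L (deg l - 1) := by
  induction hn : deg l using Nat.strong_induction_on generalizing l with
  | _ n ih =>
  rcases lt_or_ge n 2 with hn2 | hn2
  · simp [show n - 1 = 0 by omega]
  · obtain ⟨x, j, hj, hxj⟩ := hB.exists_lie_eq l (hn ▸ hn2)
    have hj1 := hB.one_le_deg j
    rw [← hxj, show n - 1 = (deg j - 1) + 1 by omega, LieModule.lowerCentralSeries_succ]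
    exact LieSubmodule.lie_mem_lie (LieSubmodule.mem_top x) (ih _ (by omega) j rfl)

theorem span_le_lowerCentralSeries (k : ℕ) :
    span K (b '' {i | k + 1 ≤ deg i}) ≤ (LieModule.lowerCentralSeries K L L k).toSubmodule := by
  rw [span_le]
  rintro _ ⟨l, hl, rfl⟩
  exact LieModule.antitone_lowerCentralSeries K L L (Nat.le_sub_one_of_lt hl)
    (hB.basis_mem_lowerCentralSeries l)

theorem lowerCentralSeries_eq_span (k : ℕ) :
    (LieModule.lowerCentralSeries K L L k).toSubmodule = span K (b '' {i | k + 1 ≤ deg i}) :=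
  le_antisymm (hB.lowerCentralSeries_le_span k) (hB.span_le_lowerCentralSeries k)

theorem lowerCentralSeries_eq_bot {k : ℕ} (hk : ∀ i, deg i ≤ k) :
    LieModule.lowerCentralSeries K L L k = ⊥ := by
  rw [← LieSubmodule.toSubmodule_eq_bot, hB.lowerCentralSeries_eq_span,
    show {i | k + 1 ≤ deg i} = ∅ from Set.eq_empty_of_forall_notMem fun i hi =>
      (hk i).not_gt hi, Set.image_empty, span_empty]

theorem lowerCentralSeries_ne_bot [Nontrivial K] {k : ℕ} {l : ι} (hl : k + 1 ≤ deg l) :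
    LieModule.lowerCentralSeries K L L k ≠ ⊥ := fun h =>
  b.ne_zero l <| (LieSubmodule.mem_bot _).mp <|
    h ▸ hB.span_le_lowerCentralSeries k (subset_span ⟨l, hl, rfl⟩)

theorem lie_eq_zero_of_mem_lowerCentralSeries {k : ℕ} (hdeg : ∀ i, deg i ≤ 2 * k + 1)
    {x y : L} (hx : x ∈ LieModule.lowerCentralSeries K L L k)
    (hy : y ∈ LieModule.lowerCentralSeries K L L k) : ⁅x, y⁆ = 0 :=
  hB.lie_eq_zero_of_mem_span (fun i => by have := hdeg i; omega)
    (hB.lowerCentralSeries_le_span k hx) (hB.lowerCentralSeries_le_span k hy)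

theorem isNaturalGrading : IsNaturalGrading K L fun n => span K (b '' {i | deg i = n}) := by
  refine ⟨?_, b.iSupIndep_span_image_fiber deg, fun i j x hx y hy => hB.lie_mem_span_deg hx hy,
    fun k => ?_⟩
  · simp [show ∀ i, deg i ≠ 0 from fun i => Nat.one_le_iff_ne_zero.mp (hB.one_le_deg i)]
  · rw [hB.lowerCentralSeries_eq_span, ← span_iUnion₂, ← Set.image_iUnion₂]
    congr 2
    ext i
    simp

end IsNaturalGradingBasis

end Lie

theorem finrank_span_lt_finrank_ker_ad {K L : Type*} [Field K] [LieRing L] [LieAlgebra K L]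
    [FiniteDimensional K L] {s : Set L} {y : L} (hy : y ∉ span K s) (hs : ∀ z ∈ s, ⁅y, z⁆ = 0) :
    finrank K (span K s) < finrank K (LinearMap.ker (LieAlgebra.ad K L y)) := by
  refine Submodule.finrank_lt_finrank_of_lt (SetLike.lt_iff_le_and_exists.mpr ⟨?_, y, ?_, hy⟩)
  · rw [span_le]
    exact fun z hz => LinearMap.mem_ker.mpr (hs z hz)
  · exact LinearMap.mem_ker.mpr (lie_self y)

def g4Degree (m n : ℕ) : ℕ := max 1 (min (n - 1) (2 * m - 1))

section G4

variable {L : Type} [LieRing L] [LieAlgebra ℂ L] {m : ℕ} (b : Basis (Fin (2 * m + 1)) ℂ L)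

theorem basisVec_val_add_one (j : Fin (2 * m + 1)) : basisVec b (j + 1) = b j := by
  rw [basisVec, dif_pos (by omega)]
  simp

theorem basisVec_mem_span_image {s : Set (Fin (2 * m + 1))} {n : ℕ}
    (hs : ∀ j : Fin (2 * m + 1), j.val + 1 = n → j ∈ s) : basisVec b n ∈ span ℂ (b '' s) := by
  unfold basisVec
  split_ifs with hn
  · exact subset_span ⟨_, hs _ (by simp only; omega), rfl⟩
  · exact zero_mem _

theorem image_basis_eq_image_basisVec (p : ℕ → Prop) :
    b '' {j | p (j.val + 1)} = basisVec b '' {n | 1 ≤ n ∧ n ≤ 2 * m + 1 ∧ p n} := by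
  ext x
  constructor
  · rintro ⟨j, hj, rfl⟩
    exact ⟨j + 1, ⟨by omega, by omega, hj⟩, basisVec_val_add_one b j⟩
  · rintro ⟨n, ⟨hn1, hn2, hp⟩, rfl⟩
    refine ⟨⟨n - 1, by omega⟩, ?_, ?_⟩
    · simpa [show n - 1 + 1 = n by omega] using hp
    · rw [← basisVec_val_add_one]
      congr 1
      simp only
      omega

theorem grading_eq_span_image (hm : 2 ≤ m) :
    (fun i => if i = 1 then span ℂ {basisVec b 1, basisVec b 2}
      else if 2 ≤ i ∧ i ≤ 2 * m - 2 then span ℂ {basisVec b (i + 1)}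
      else if i = 2 * m - 1 then span ℂ {basisVec b (2 * m), basisVec b (2 * m + 1)}
      else ⊥) = fun n => span ℂ (b '' {j | g4Degree m (j + 1) = n}) := by
  funext i
  rw [image_basis_eq_image_basisVec b fun n => g4Degree m n = i]
  split_ifs with h₁ h₂ h₃
  all_goals
    first
    | rw [← Set.image_pair] | rw [← Set.image_singleton] | rw [← span_empty, ← Set.image_empty]
    congr 2
    ext n
    simp only [g4Degree, Set.mem_insert_iff, Set.mem_singleton_iff, Set.mem_ofPred_eq,
      Set.mem_empty_iff_false, false_iff]
    omega

variable {b} (hb : IsG4Basis m b)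
include hb

theorem lie_basisVec_mem_span_of_lt {a c : ℕ} (hac : a < c) :
    ⁅basisVec b a, basisVec b c⁆ ∈
      span ℂ (b '' {l | g4Degree m (l + 1) = g4Degree m a + g4Degree m c}) := by
  rw [hb a c hac]
  refine add_mem ?_ ?_ <;> split_ifs with h
  · exact basisVec_mem_span_image b fun j hj => by simp only [Set.mem_ofPred_eq, g4Degree]; omega
  · exact zero_mem _
  · exact smul_mem _ _ <| basisVec_mem_span_image b fun j hj => by
      simp only [Set.mem_ofPred_eq, g4Degree]; omega
  · exact zero_mem _

theorem isNaturalGradingBasis : IsNaturalGradingBasis b fun j => g4Degree m (j + 1) where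
  one_le_deg j := le_max_left _ _
  lie_mem i j := by
    rw [← basisVec_val_add_one b i, ← basisVec_val_add_one b j]
    rcases lt_trichotomy i.val j.val with h | h | h
    · exact lie_basisVec_mem_span_of_lt hb (by omega)
    · rw [h, lie_self]
      exact zero_mem _
    · rw [← lie_skew, add_comm (g4Degree m (i + 1))]
      exact neg_mem (lie_basisVec_mem_span_of_lt hb (by omega))
  exists_lie_eq l hl := by
    simp only [g4Degree] at hl ⊢
    rcases lt_or_ge l.val (2 * m) with hl2 | hl2
    · refine ⟨basisVec b 1, ⟨l - 1, by omega⟩, by simp only; omega, ?_⟩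
      rw [← basisVec_val_add_one b l, ← basisVec_val_add_one b, hb 1 _ (by simp only; omega),
        if_pos ⟨rfl, by simp only; omega, by simp only; omega⟩, if_neg (by omega), add_zero]
      congr 1
      simp only
      omega
    · refine ⟨basisVec b 2, ⟨2 * m - 2, by omega⟩, by simp only; omega, ?_⟩
      rw [← basisVec_val_add_one b l, ← basisVec_val_add_one b, hb 2 _ (by simp only; omega),
        if_neg (by omega), if_pos ⟨le_rfl, by omega, by simp only; omega⟩, zero_add]
      simp only [even_two, Even.neg_one_pow, one_smul]
      congr 1
      omega

theorem basisVec_mem_lowerCentralSeries {k n : ℕ} (hkn : k + 1 ≤ g4Degree m n) :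
    basisVec b n ∈ LieModule.lowerCentralSeries ℂ L L k :=
  (isNaturalGradingBasis hb).span_le_lowerCentralSeries k <|
    basisVec_mem_span_image b fun j hj => by simpa only [Set.mem_ofPred_eq, hj] using hkn

theorem ad_basisVec_one (n : ℕ) :
    LieAlgebra.ad ℂ L (basisVec b 1) (basisVec b n) =
      if 2 ≤ n ∧ n + 1 ≤ 2 * m then basisVec b (n + 1) else 0 := by
  rw [LieAlgebra.ad_apply]
  rcases lt_trichotomy n 1 with hn | rfl | hn
  · simp [show n = 0 by omega, basisVec]
  · simp
  · rw [hb 1 n hn, if_neg (show ¬(2 ≤ 1 ∧ _) by omega), add_zero]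
    exact if_congr (by omega) rfl rfl

theorem ad_basisVec_one_pow_succ (i n : ℕ) :
    (LieAlgebra.ad ℂ L (basisVec b 1) ^ (i + 1)) (basisVec b n) =
      if 2 ≤ n ∧ n + i + 1 ≤ 2 * m then basisVec b (n + i + 1) else 0 := by
  induction i generalizing n with
  | zero => simpa using ad_basisVec_one hb n
  | succ i ih =>
    rw [pow_succ, Module.End.mul_apply, ad_basisVec_one hb]
    split_ifs with h₁ h₂ h₂
    · rw [ih, if_pos (by omega)]
      ring_nf
    · rw [ih, if_neg (by omega)]
    · omega
    · exact map_zero _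

theorem ker_ad_basisVec_one_pow {i : ℕ} (hi : 1 ≤ i) :
    LinearMap.ker (LieAlgebra.ad ℂ L (basisVec b 1) ^ i) =
      span ℂ (b '' {j | 1 ≤ j.val ∧ j.val ≤ 2 * m - 1 - i}ᶜ) := by
  obtain ⟨i, rfl⟩ := Nat.exists_eq_add_of_le' hi
  -- the `min` only keeps the shift `j ↦ j + i + 1` inside `Fin (2 * m + 1)`
  refine b.ker_eq_span_image_compl _ (σ := fun j => ⟨min (j + i + 1) (2 * m), by omega⟩)
    (fun j hj k hk hjk => ?_) (fun j hj => ?_) (fun j hj => ?_)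
  · simp only [Set.mem_ofPred_eq, Fin.mk.injEq] at hj hk hjk
    omega
  · simp only [Set.mem_ofPred_eq] at hj
    rw [← basisVec_val_add_one b j, ad_basisVec_one_pow_succ hb, if_pos (by omega),
      ← basisVec_val_add_one]
    congr 1
    simp only
    omega
  · simp only [Set.mem_ofPred_eq] at hj
    rw [← basisVec_val_add_one b j, ad_basisVec_one_pow_succ hb, if_neg (by omega)]

theorem finrank_ker_ad_basisVec_one_pow (hm : 1 ≤ m) {i : ℕ} (hi : 1 ≤ i) :
    finrank ℂ (LinearMap.ker (LieAlgebra.ad ℂ L (basisVec b 1) ^ i)) = min i (2 * m - 1) + 2 := by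
  have hcard := Fin.card_filter_le_val_le (n := 2 * m + 1) (a := 1) (c := 2 * m - 1 - i)
    (by omega)
  rw [ker_ad_basisVec_one_pow hb hi, ← coe_filter_univ, ← coe_compl, b.finrank_span_image,
    card_compl, hcard, Fintype.card_fin]
  omega

theorem not_forall_lie_eq_zero_of_mem_lowerCentralSeries (hm : 2 ≤ m) :
    ¬ ∀ x y : L, x ∈ LieModule.lowerCentralSeries ℂ L L (m - 2) →
      y ∈ LieModule.lowerCentralSeries ℂ L L (m - 2) → ⁅x, y⁆ = 0 := fun h => by
  have := h _ _ (basisVec_mem_lowerCentralSeries hb (n := m) (by simp only [g4Degree]; omega))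
    (basisVec_mem_lowerCentralSeries hb (n := m + 1) (by simp only [g4Degree]; omega))
  rw [hb m (m + 1) (by omega), if_neg (by omega), if_pos ⟨hm, le_rfl, by omega⟩, zero_add,
    (basisVec_val_add_one b ⟨2 * m, by omega⟩ : basisVec b (2 * m + 1) = _)] at this
  exact smul_ne_zero (pow_ne_zero _ (neg_ne_zero.mpr one_ne_zero)) (b.ne_zero _) this

theorem three_le_finrank_ker_ad (hm : 2 ≤ m) {y : L}
    (hy : y ∉ LieModule.lowerCentralSeries ℂ L L 1) :
    3 ≤ finrank ℂ (LinearMap.ker (LieAlgebra.ad ℂ L y)) := by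
  have hB := isNaturalGradingBasis hb
  have : FiniteDimensional ℂ L := Module.Finite.of_basis b
  let top : Finset (Fin (2 * m + 1)) := {j | 2 * m - 1 ≤ j.val ∧ j.val ≤ 2 * m}
  have htop_card : #top = 2 := by
    rw [Fin.card_filter_le_val_le (by omega)]
    omega
  have htop_le : span ℂ (b '' top) ≤ (LieModule.lowerCentralSeries ℂ L L 1).toSubmodule :=
    (span_mono (Set.image_mono fun j hj => by
      simp only [top, coe_filter, mem_univ, true_and, Set.mem_ofPred_eq, g4Degree] at hj ⊢
      omega)).trans (hB.span_le_lowerCentralSeries 1)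
  have := finrank_span_lt_finrank_ker_ad (fun h => hy (htop_le h)) fun z ⟨j, hj, hjz⟩ => by
    simp only [top, coe_filter, mem_univ, true_and, Set.mem_ofPred_eq] at hj
    exact hjz ▸ hB.lie_basis_eq_zero_of_forall_deg_le (fun i => by simp only [g4Degree]; omega) y
  rwa [b.finrank_span_image, htop_card] at this

end G4

theorem stmt_6 (L : Type) [LieRing L] [LieAlgebra ℂ L] (m : ℕ) (hm : 4 ≤ m)
    (b : Basis (Fin (2 * m + 1)) ℂ L) (hb : IsG4Basis m b) :
    -- nilpotent of nilindex 2m-1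
    (LieModule.lowerCentralSeries ℂ L L (2 * m - 1) = ⊥ ∧
     LieModule.lowerCentralSeries ℂ L L (2 * m - 2) ≠ ⊥) ∧
    -- naturally graded, a natural grading being the given one
    (∀ g : ℕ → Submodule ℂ L,
      (g = fun i =>
        if i = 1 then Submodule.span ℂ {basisVec b 1, basisVec b 2}
        else if 2 ≤ i ∧ i ≤ 2 * m - 2 then Submodule.span ℂ {basisVec b (i + 1)}
        else if i = 2 * m - 1 then
          Submodule.span ℂ {basisVec b (2 * m), basisVec b (2 * m + 1)}
        else ⊥) →
      (g 0 = ⊥ ∧ iSupIndep g ∧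
       (∀ i j : ℕ, ∀ x ∈ g i, ∀ y ∈ g j, ⁅x, y⁆ ∈ g (i + j)) ∧
       (∀ k : ℕ, (LieModule.lowerCentralSeries ℂ L L k).toSubmodule
          = ⨆ i, ⨆ _ : k + 1 ≤ i, g i))) ∧
    -- (m-1)-abelian
    ((∀ x y : L, x ∈ LieModule.lowerCentralSeries ℂ L L (m - 1) →
        y ∈ LieModule.lowerCentralSeries ℂ L L (m - 1) → ⁅x, y⁆ = 0) ∧
     ¬ (∀ x y : L, x ∈ LieModule.lowerCentralSeries ℂ L L (m - 2) →
        y ∈ LieModule.lowerCentralSeries ℂ L L (m - 2) → ⁅x, y⁆ = 0)) ∧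
    -- characteristic sequence (2m-1, 1, 1)
    ((∀ i : ℕ, 1 ≤ i →
        finrank ℂ (LinearMap.ker ((LieAlgebra.ad ℂ L (basisVec b 1)) ^ i))
          = min i (2 * m - 1) + 2) ∧
     (∀ Y : L, Y ∉ LieModule.lowerCentralSeries ℂ L L 1 →
        3 ≤ finrank ℂ (LinearMap.ker (LieAlgebra.ad ℂ L Y)))) := by
  have hB := isNaturalGradingBasis hb
  have hdeg : ∀ j : Fin (2 * m + 1), g4Degree m (j + 1) ≤ 2 * m - 1 := fun j => by
    simp only [g4Degree]
    omega
  refine ⟨⟨hB.lowerCentralSeries_eq_bot hdeg,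
      hB.lowerCentralSeries_ne_bot (l := ⟨2 * m - 1, by omega⟩) (by simp only [g4Degree]; omega)⟩,
    fun g hg => ?_,
    ⟨fun x y => hB.lie_eq_zero_of_mem_lowerCentralSeries fun j => by have := hdeg j; omega,
      not_forall_lie_eq_zero_of_mem_lowerCentralSeries hb (by omega)⟩,
    fun i => finrank_ker_ad_basisVec_one_pow hb (by omega),
    fun Y => three_le_finrank_ker_ad hb (by omega)⟩
  rw [hg, grading_eq_span_image b (by omega)]
  exact hB.isNaturalGrading
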